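/- arXiv:1106.6250 — 7 statements merged into one kernel-verified Lean document; each statement's English description precedes it below -/
import Mathlib

section
/- For a finite simple graph G and an edge e = (u,v), every independent set of G − e (the graph G with edge e removed) is either an independent set of G, or contains both u and v together with an independent set of G \ N[e]. Consequently, Ind(G − e) is the union of Ind(G) and the join e * Ind(G \ N[e]), and their intersection is Ind(e ⊔ (G \ N[e])). -/
/-- A set of vertices is independent in `G` if no two of its members are adjacent. -/
def IndepSet {V : Type*} (G : SimpleGraph V) (s : Set V) : Prop :=
  ∀ a ∈ s, ∀ b ∈ s, ¬ G.Adj a b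

lemma IndepSet.mono {V : Type*} {G : SimpleGraph V} {s t : Set V} (h : IndepSet G t)
    (hst : s ⊆ t) : IndepSet G s := fun a ha b hb => h a (hst ha) b (hst hb)

theorem stmt1 {V : Type*} [Fintype V] (G : SimpleGraph V) (u v : V) (huv : G.Adj u v) :
    (∀ s : Set V, IndepSet (G.deleteEdges {s(u, v)}) s →
      (IndepSet G s ∨ (u ∈ s ∧ v ∈ s ∧
        IndepSet G (s \ {u, v}) ∧
        (s \ {u, v}) ∩ (insert u (G.neighborSet u) ∪ insert v (G.neighborSet v)) = ∅))) ∧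
    {s : Set V | IndepSet (G.deleteEdges {s(u, v)}) s} =
      {s : Set V | IndepSet G s} ∪
      {s : Set V | s ⊆ {u, v} ∪ (insert u (G.neighborSet u) ∪ insert v (G.neighborSet v))ᶜ ∧
        IndepSet G (s \ {u, v})} ∧
    {s : Set V | IndepSet G s} ∩
      {s : Set V | s ⊆ {u, v} ∪ (insert u (G.neighborSet u) ∪ insert v (G.neighborSet v))ᶜ ∧
        IndepSet G (s \ {u, v})} =
      {s : Set V | s ⊆ {u, v} ∪ (insert u (G.neighborSet u) ∪ insert v (G.neighborSet v))ᶜ ∧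
        IndepSet G s} := by
  have hne : u ≠ v := huv.ne
  -- key: from indep in G−e, adjacency in G forces the pair {u,v}
  have key : ∀ s : Set V, IndepSet (G.deleteEdges {s(u, v)}) s →
      ∀ a ∈ s, ∀ b ∈ s, G.Adj a b → (a = u ∧ b = v) ∨ (a = v ∧ b = u) := by
    intro s hs a ha b hb hab
    have := hs a ha b hb
    simp only [SimpleGraph.deleteEdges_adj, Set.mem_singleton_iff] at this
    have : s(a, b) = s(u, v) := by tauto
    simpa [Sym2.eq_iff] using this
  have part1 : ∀ s : Set V, IndepSet (G.deleteEdges {s(u, v)}) s →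
      (IndepSet G s ∨ (u ∈ s ∧ v ∈ s ∧
        IndepSet G (s \ {u, v}) ∧
        (s \ {u, v}) ∩ (insert u (G.neighborSet u) ∪ insert v (G.neighborSet v)) = ∅)) := by
    intro s hs
    by_cases hG : IndepSet G s
    · exact Or.inl hG
    right
    simp only [IndepSet, not_forall] at hG
    obtain ⟨a, ha, b, hb, hab⟩ := hG
    push_neg at hab
    have hcase := key s hs a ha b hb hab
    have hu : u ∈ s ∧ v ∈ s := by
      rcases hcase with ⟨rfl, rfl⟩ | ⟨rfl, rfl⟩ <;> exact ⟨by assumption, by assumption⟩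
    refine ⟨hu.1, hu.2, ?_, ?_⟩
    · intro a ha b hb hab
      rcases key s hs a ha.1 b hb.1 hab with ⟨rfl, rfl⟩ | ⟨rfl, rfl⟩
      · exact ha.2 (Or.inl rfl)
      · exact ha.2 (Or.inr rfl)
    · ext w
      simp only [Set.mem_inter_iff, Set.mem_diff, Set.mem_insert_iff, Set.mem_union,
        Set.mem_singleton_iff, SimpleGraph.mem_neighborSet, Set.mem_empty_iff_false, iff_false,
        not_and]
      rintro ⟨hw, hw2⟩ (h | h)
      · rcases h with rfl | h
        · exact hw2 (Or.inl rfl)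
        · rcases key s hs u hu.1 w hw h with ⟨-, rfl⟩ | ⟨-, rfl⟩
          · exact hw2 (Or.inr rfl)
          · exact hw2 (Or.inl rfl)
      · rcases h with rfl | h
        · exact hw2 (Or.inr rfl)
        · rcases key s hs v hu.2 w hw h with ⟨-, rfl⟩ | ⟨-, rfl⟩
          · exact hw2 (Or.inr rfl)
          · exact hw2 (Or.inl rfl)
  refine ⟨part1, ?_, ?_⟩
  · ext s
    simp only [Set.mem_setOf_eq, Set.mem_union]
    constructor
    · intro hs
      rcases part1 s hs with h | ⟨hu, hv, hind, hinter⟩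
      · exact Or.inl h
      · refine Or.inr ⟨?_, hind⟩
        intro w hw
        by_cases hwuv : w = u ∨ w = v
        · exact Or.inl hwuv
        · refine Or.inr ?_
          intro hmem
          have : w ∈ (s \ {u, v}) ∩ (insert u (G.neighborSet u) ∪ insert v (G.neighborSet v)) :=
            ⟨⟨hw, hwuv⟩, hmem⟩
          rw [hinter] at this
          exact this
    · rintro (h | ⟨hsub, hind⟩)
      · intro a ha b hb hab
        rw [SimpleGraph.deleteEdges_adj] at hab
        exact h a ha b hb hab.1
      · intro a ha b hb hab
        rw [SimpleGraph.deleteEdges_adj, Set.mem_singleton_iff] at hab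
        obtain ⟨hab, hne'⟩ := hab
        have hnuv : ∀ w ∈ s, G.Adj u w ∨ G.Adj v w → w = u ∨ w = v := by
          intro w hw hadj
          rcases hsub hw with h' | h'
          · exact h'
          · exfalso
            simp only [Set.mem_compl_iff, Set.mem_union, Set.mem_insert_iff,
              SimpleGraph.mem_neighborSet, not_or] at h'
            rcases hadj with h2 | h2
            · exact h'.1.2 h2
            · exact h'.2.2 h2
        by_cases hau : a = u ∨ a = v
        · rcases hau with rfl | rfl
          · rcases hnuv b hb (Or.inl hab) with rfl | rfl
            · exact hab.ne rfl
            · exact hne' rfl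
          · rcases hnuv b hb (Or.inr hab) with rfl | rfl
            · exact hne' (Sym2.eq_swap)
            · exact hab.ne rfl
        · by_cases hbu : b = u ∨ b = v
          · rcases hbu with rfl | rfl
            · rcases hnuv a ha (Or.inl hab.symm) with rfl | rfl
              · exact hab.ne rfl
              · exact hne' (Sym2.eq_swap)
            · rcases hnuv a ha (Or.inr hab.symm) with rfl | rfl
              · exact hne' rfl
              · exact hab.ne rfl
          · exact hind a ⟨ha, hau⟩ b ⟨hb, hbu⟩ hab
  · ext s
    simp only [Set.mem_inter_iff, Set.mem_setOf_eq]
    constructor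
    · rintro ⟨hind, hsub, _⟩
      exact ⟨hsub, hind⟩
    · rintro ⟨hsub, hind⟩
      exact ⟨hind, hsub, hind.mono Set.diff_subset⟩
end

section
/- Let r ≥ 1 and let T = T_{3r+3} be the graph on {1,…,3r+3} defined as P_{3r+3}^r together with, for each s = 1,…,r−1, edges (i, i+2r−s+2) for 1 ≤ i ≤ r+s+1 and edges (i, i+3r−s+3) for 1 ≤ i ≤ s. Then for any vertex i with 1 ≤ i ≤ r, the induced subgraph T \ N[i] has exactly the four vertices i+r+1, i+r+2, i+2r+2, i+2r+3, and is isomorphic to the path P_4 (its only edges are (i+r+1, i+r+2), (i+r+2, i+2r+2), (i+2r+2, i+2r+3)). -/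
/-- The edge relation of the graph `T_{3r+3}`: the `r`-th power of a path on
`{1, …, 3r+3}` together with, for each stage `s = 1, …, r-1`, the edges
`(i, i+2r-s+2)` for `1 ≤ i ≤ r+s+1` and the edges `(i, i+3r-s+3)` for `1 ≤ i ≤ s`. -/
def TEdge (r i j : ℕ) : Prop :=
  1 ≤ i ∧ j ≤ 3 * r + 3 ∧ i < j ∧
    (j ≤ i + r ∨ ∃ s : ℕ, 1 ≤ s ∧ s ≤ r - 1 ∧
      ((j = i + (2 * r - s + 2) ∧ i ≤ r + s + 1) ∨ (j = i + (3 * r - s + 3) ∧ i ≤ s)))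

/-- The graph `T_{3r+3}` on the vertices `{1, …, 3r+3}` (as a graph on `ℕ`). -/
def Tgraph (r : ℕ) : SimpleGraph ℕ := SimpleGraph.fromRel (TEdge r)

lemma adj_iff' (r a b : ℕ) :
    (Tgraph r).Adj a b ↔ a ≠ b ∧ (TEdge r a b ∨ TEdge r b a) := by
  simp [Tgraph, SimpleGraph.fromRel_adj]

theorem stmt8 (r i : ℕ) (hr : 1 ≤ r) (h1 : 1 ≤ i) (h2 : i ≤ r) :
    (∀ m : ℕ, (1 ≤ m ∧ m ≤ 3 * r + 3 ∧ m ∉ insert i ((Tgraph r).neighborSet i)) ↔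
      m ∈ ({i + r + 1, i + r + 2, i + 2 * r + 2, i + 2 * r + 3} : Set ℕ)) ∧
    (∀ a ∈ ({i + r + 1, i + r + 2, i + 2 * r + 2, i + 2 * r + 3} : Set ℕ),
      ∀ b ∈ ({i + r + 1, i + r + 2, i + 2 * r + 2, i + 2 * r + 3} : Set ℕ),
        ((Tgraph r).Adj a b ↔
          ((a = i + r + 1 ∧ b = i + r + 2) ∨ (a = i + r + 2 ∧ b = i + r + 1) ∨
           (a = i + r + 2 ∧ b = i + 2 * r + 2) ∨ (a = i + 2 * r + 2 ∧ b = i + r + 2) ∨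
           (a = i + 2 * r + 2 ∧ b = i + 2 * r + 3) ∨
           (a = i + 2 * r + 3 ∧ b = i + 2 * r + 2)))) := by
  constructor
  · intro m
    simp only [Set.mem_insert_iff, SimpleGraph.mem_neighborSet, Set.mem_singleton_iff]
    constructor
    · rintro ⟨hm1, hm2, hm3⟩
      push_neg at hm3
      obtain ⟨hmi, hadj⟩ := hm3
      rw [adj_iff'] at hadj
      by_contra hc
      push_neg at hc
      obtain ⟨c1, c2, c3, c4⟩ := hc
      apply hadj
      refine ⟨fun h => hmi h.symm, ?_⟩
      rcases lt_or_gt_of_ne hmi with hlt | hgt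
      · exact Or.inr ⟨by omega, by omega, by omega, Or.inl (by omega)⟩
      · refine Or.inl ⟨by omega, by omega, by omega, ?_⟩
        by_cases hA : m ≤ i + r
        · exact Or.inl hA
        · by_cases hB : m ≤ i + 2 * r + 1
          · exact Or.inr ⟨i + 2 * r + 2 - m, by omega, by omega,
              Or.inl ⟨by omega, by omega⟩⟩
          · exact Or.inr ⟨i + 3 * r + 3 - m, by omega, by omega,
              Or.inr ⟨by omega, by omega⟩⟩
    · intro hm
      refine ⟨by rcases hm with h|h|h|h <;> omega,
              by rcases hm with h|h|h|h <;> omega, ?_⟩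
      rintro (h | hadj)
      · rcases hm with h'|h'|h'|h' <;> omega
      · rw [adj_iff'] at hadj
        obtain ⟨hne, hT | hT⟩ := hadj <;>
          obtain ⟨e1, e2, e3, e4 | ⟨s, hs1, hs2, ⟨he, hi⟩ | ⟨he, hi⟩⟩⟩ := hT <;>
          rcases hm with h'|h'|h'|h' <;> omega
  · intro a ha b hb
    simp only [Set.mem_insert_iff, Set.mem_singleton_iff] at ha hb
    rcases ha with rfl|rfl|rfl|rfl <;> rcases hb with rfl|rfl|rfl|rfl <;>
      rw [adj_iff'] <;> constructor <;>
      first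
      | (rintro ⟨hne, ⟨e1, e2, e3, e4 | ⟨s, hs1, hs2, ⟨he, hi⟩ | ⟨he, hi⟩⟩⟩ |
           ⟨e1, e2, e3, e4 | ⟨s, hs1, hs2, ⟨he, hi⟩ | ⟨he, hi⟩⟩⟩⟩ <;>
          first | omega | (exfalso; omega))
      | (intro h; exact ⟨by omega, Or.inl ⟨by omega, by omega, by omega, Or.inl (by omega)⟩⟩)
      | (intro h; exact ⟨by omega, Or.inr ⟨by omega, by omega, by omega, Or.inl (by omega)⟩⟩)
end

section
/- Let r ≥ 1, T = T_{3r+3} as above, and 0 ≤ k ≤ r+1. Then the complement graph of the induced subgraph T[{k+1, …, k+2r+2}] is a path on 2r+2 vertices; explicitly it is the path k+r+1, k+2r+2, k+r, k+2r+1, k+r−1, …, k+1, k+r+2. -/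
/-- The vertex sequence `k+r+1, k+2r+2, k+r, k+2r+1, k+r-1, …, k+1, k+r+2` of the path
forming the complement of `T[{k+1, …, k+2r+2}]`. -/
def pathSeq (k r t : ℕ) : ℕ :=
  if t % 2 = 0 then k + r + 1 - t / 2 else k + 2 * r + 2 - t / 2

lemma pathSeq_even (k r m : ℕ) : pathSeq k r (2 * m) = k + r + 1 - m := by
  have h1 : (2 * m) % 2 = 0 := by omega
  have h2 : (2 * m) / 2 = m := by omega
  simp [pathSeq, h1, h2]

lemma pathSeq_odd (k r m : ℕ) : pathSeq k r (2 * m + 1) = k + 2 * r + 2 - m := by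
  have h1 : (2 * m + 1) % 2 = 1 := by omega
  have h2 : (2 * m + 1) / 2 = m := by omega
  simp [pathSeq, h1, h2]

lemma adj_iff {r k a b : ℕ} (hr : 1 ≤ r) (hk : k ≤ r + 1) (ha : k + 1 ≤ a)
    (hb : b ≤ k + 2 * r + 2) (hab : a < b) :
    (Tgraph r).Adj a b ↔ (b ≤ a + r ∨ a + r + 3 ≤ b) := by
  rw [Tgraph, SimpleGraph.fromRel_adj]
  constructor
  · rintro ⟨-, h | h⟩
    · unfold TEdge at h
      obtain ⟨-, -, -, h | ⟨s, hs1, hs2, ⟨h1, h2⟩ | ⟨h1, h2⟩⟩⟩ := h <;> omega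
    · unfold TEdge at h
      obtain ⟨-, -, hlt, -⟩ := h; omega
  · intro h
    refine ⟨by omega, Or.inl ⟨by omega, by omega, hab, ?_⟩⟩
    rcases h with h | h
    · exact Or.inl h
    · exact Or.inr ⟨a + 2 * r + 2 - b, by omega, by omega,
        Or.inl ⟨by omega, by omega⟩⟩

lemma key {r k a b : ℕ} (hr : 1 ≤ r) (hk : k ≤ r + 1) (ha : k + 1 ≤ a)
    (ha2 : a ≤ k + 2 * r + 2) (hb : k + 1 ≤ b) (hb2 : b ≤ k + 2 * r + 2) (hab : a < b) :
    (¬ (Tgraph r).Adj a b ↔ ∃ t : ℕ, t < 2 * r + 1 ∧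
      ((a = pathSeq k r t ∧ b = pathSeq k r (t + 1)) ∨
       (b = pathSeq k r t ∧ a = pathSeq k r (t + 1)))) := by
  rw [adj_iff hr hk ha hb2 hab]
  constructor
  · intro h
    have hd : b = a + r + 1 ∨ b = a + r + 2 := by omega
    rcases hd with hd | hd
    · refine ⟨2 * (k + r + 1 - a), by omega, Or.inl ⟨?_, ?_⟩⟩
      · rw [pathSeq_even]; omega
      · rw [pathSeq_odd]; omega
    · refine ⟨2 * (k + r - a) + 1, by omega, Or.inr ⟨?_, ?_⟩⟩
      · rw [pathSeq_odd]; omega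
      · have : 2 * (k + r - a) + 1 + 1 = 2 * (k + r - a + 1) := by omega
        rw [this, pathSeq_even]; omega
  · rintro ⟨t, ht, h⟩
    simp only [pathSeq] at h
    rcases h with ⟨h1, h2⟩ | ⟨h1, h2⟩ <;> split_ifs at h1 h2 <;> omega

theorem stmt10 (r k : ℕ) (hr : 1 ≤ r) (hk : k ≤ r + 1) :
    (∀ t ≤ 2 * r + 1, k + 1 ≤ pathSeq k r t ∧ pathSeq k r t ≤ k + 2 * r + 2) ∧
    Set.InjOn (pathSeq k r) (Set.Iic (2 * r + 1)) ∧
    (∀ a b : ℕ, k + 1 ≤ a → a ≤ k + 2 * r + 2 → k + 1 ≤ b → b ≤ k + 2 * r + 2 →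
      a ≠ b →
      (¬ (Tgraph r).Adj a b ↔ ∃ t : ℕ, t < 2 * r + 1 ∧
        ((a = pathSeq k r t ∧ b = pathSeq k r (t + 1)) ∨
         (b = pathSeq k r t ∧ a = pathSeq k r (t + 1))))) := by
  refine ⟨?_, ?_, ?_⟩
  · intro t ht
    simp only [pathSeq]
    split_ifs <;> omega
  · intro x hx y hy h
    simp only [Set.mem_Iic] at hx hy
    simp only [pathSeq] at h
    split_ifs at h <;> omega
  · intro a b ha1 ha2 hb1 hb2 hab
    rcases lt_or_gt_of_ne hab with h | h
    · exact key hr hk ha1 ha2 hb1 hb2 h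
    · rw [SimpleGraph.adj_comm]
      rw [key hr hk hb1 hb2 ha1 ha2 h]
      constructor <;> rintro ⟨t, ht, hc⟩ <;> exact ⟨t, ht, hc.symm⟩
end

section
/- Let r ≥ 1 and n ≥ 5r+4. Let C_n^r be the r-th power of the cycle on vertex set Z/n, and let R be the induced subgraph of C_n^r on the vertices {3r+4, 3r+5, …, n−1, 0} together with the extra edges (−x, 3r+3+y) for all 0 ≤ x ≤ r−1, 1 ≤ y ≤ r with x + y ≤ r. Then R is isomorphic to C_{n−(3r+3)}^r, the r-th power of the cycle on n−(3r+3) vertices. -/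
/-- The `r`-th power of the cycle on `n` vertices: `i ~ j` iff their cyclic distance is
between `1` and `r`. -/
def cyclePow (n r : ℕ) : SimpleGraph (ZMod n) :=
  SimpleGraph.fromRel (fun i j => ∃ d : ℕ, 1 ≤ d ∧ d ≤ r ∧ i + (d : ZMod n) = j)

/-- The extra edges `(-x, 3r+3+y)` for `0 ≤ x ≤ r-1`, `1 ≤ y ≤ r`, `x + y ≤ r`. -/
def extraRel (n r : ℕ) (i j : ZMod n) : Prop :=
  ∃ x y : ℕ, x ≤ r - 1 ∧ 1 ≤ y ∧ y ≤ r ∧ x + y ≤ r ∧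
    i = -(x : ZMod n) ∧ j = ((3 * r + 3 + y : ℕ) : ZMod n)

/-- The vertex set `{3r+4, 3r+5, …, n-1, 0}` of the graph `R`. -/
def Rset (n r : ℕ) : Set (ZMod n) :=
  {v | v = 0 ∨ ∃ m : ℕ, 3 * r + 4 ≤ m ∧ m ≤ n - 1 ∧ v = (m : ZMod n)}

/-- The graph `R_n^r`: the induced subgraph of `C_n^r` on `{3r+4, …, n-1, 0}` together
with the extra edges `(-x, 3r+3+y)`. -/
def Rgraph (n r : ℕ) : SimpleGraph (Rset n r) :=
  SimpleGraph.fromRel (fun a b => (cyclePow n r).Adj a.1 b.1 ∨ extraRel n r a.1 b.1)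


/-!
List the vertices of `R` in cyclic order `3r+4, …, n-1, 0` and call them `0, …, m-1`,
where `m = n - (3r+3)`. Two of them are adjacent in `C_n^r` exactly when their positions are at
linear distance at most `r`: the gap `1, …, 3r+3` is too wide for an edge of `C_n^r` to jump it.
The extra edge `(-x, 3r+3+y)` joins positions `m-1-x` and `y-1`, i.e. a pair at cyclic distance
`x+y ≤ r` across the wrap-around, and every such pair arises this way. So `k ↦ 3r+4+k` is an
isomorphism `C_m^r ≅ R`.
-/

theorem ZMod.natCast_eq_natCast_iff_of_lt {N a b : ℕ} (hab : a < b + 2 * N)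
    (hba : b < a + 2 * N) : (a : ZMod N) = b ↔ a = b ∨ a = b + N ∨ b = a + N := by
  constructor
  · intro h
    obtain ⟨c, hc⟩ := Nat.modEq_iff_dvd.mp ((ZMod.natCast_eq_natCast_iff a b N).mp h)
    have hc_lt : c < 2 := by nlinarith
    have hc_gt : -2 < c := by nlinarith
    interval_cases c <;> omega
  · rintro (rfl | rfl | rfl) <;> simp

theorem cyclePow_adj_iff {N r : ℕ} (hr : r < N) (i j : ZMod N) :
    (cyclePow N r).Adj i j ↔ ∃ d : ℕ, 1 ≤ d ∧ d ≤ r ∧ (i + d = j ∨ j + d = i) := by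
  rw [cyclePow, SimpleGraph.fromRel_adj]
  constructor
  · rintro ⟨-, ⟨d, hd1, hdr, h⟩ | ⟨d, hd1, hdr, h⟩⟩
    exacts [⟨d, hd1, hdr, .inl h⟩, ⟨d, hd1, hdr, .inr h⟩]
  · rintro ⟨d, hd1, hdr, h⟩
    refine ⟨?_, h.imp (⟨d, hd1, hdr, ·⟩) (⟨d, hd1, hdr, ·⟩)⟩
    rintro rfl
    have hd : (d : ZMod N) = 0 := by simpa using h
    exact absurd (Nat.le_of_dvd (by omega) ((ZMod.natCast_eq_zero_iff d N).mp hd)) (by omega)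

theorem cyclePow_adj_natCast_iff {N r a b : ℕ} (hr : r < N) (ha : a ≤ N) (hb : b ≤ N) :
    (cyclePow N r).Adj a b ↔ ∃ d : ℕ, 1 ≤ d ∧ d ≤ r ∧
      (a + d = b ∨ b + d = a ∨ a + d = b + N ∨ b + d = a + N) := by
  rw [cyclePow_adj_iff hr]
  refine exists_congr fun d => and_congr_right fun hd1 => and_congr_right fun hdr => ?_
  simp only [← Nat.cast_add]
  rw [ZMod.natCast_eq_natCast_iff_of_lt (by omega) (by omega),
    ZMod.natCast_eq_natCast_iff_of_lt (by omega) (by omega)]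
  omega

section Rgraph

variable {m r : ℕ}

def rsetVertex (m r : ℕ) (k : ZMod m) : ZMod (m + (3 * r + 3)) :=
  ((k.val + (3 * r + 4) : ℕ) : ZMod (m + (3 * r + 3)))

theorem rsetVertex_natCast {j : ℕ} (hj : j < m) :
    rsetVertex m r j = ((j + (3 * r + 4) : ℕ) : ZMod (m + (3 * r + 3))) := by
  rw [rsetVertex, ZMod.val_natCast_of_lt hj]

variable [NeZero m]

theorem rsetVertex_mem (k : ZMod m) : rsetVertex m r k ∈ Rset (m + (3 * r + 3)) r := by
  have hk := ZMod.val_lt k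
  rcases Nat.lt_or_ge (k.val + 1) m with h | h
  · exact .inr ⟨_, by omega, by omega, rfl⟩
  · refine .inl ?_
    rw [rsetVertex, show k.val + (3 * r + 4) = m + (3 * r + 3) by omega, ZMod.natCast_self]

theorem rsetVertex_injective : Function.Injective (rsetVertex m r) := by
  intro k l h
  have hk := ZMod.val_lt k
  have hl := ZMod.val_lt l
  rw [rsetVertex, rsetVertex, ZMod.natCast_eq_natCast_iff_of_lt (by omega) (by omega)] at h
  exact ZMod.val_injective m (by omega)

theorem exists_rsetVertex_eq {v : ZMod (m + (3 * r + 3))} (hv : v ∈ Rset (m + (3 * r + 3)) r) :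
    ∃ k : ZMod m, rsetVertex m r k = v := by
  have hm := NeZero.pos m
  rcases hv with rfl | ⟨c, hc, hcn, rfl⟩
  · refine ⟨(m - 1 : ℕ), ?_⟩
    rw [rsetVertex_natCast (by omega), show m - 1 + (3 * r + 4) = m + (3 * r + 3) by omega,
      ZMod.natCast_self]
  · refine ⟨(c - (3 * r + 4) : ℕ), ?_⟩
    rw [rsetVertex_natCast (by omega), Nat.sub_add_cancel hc]

theorem cyclePow_adj_rsetVertex_iff (hrm : r < m) (k l : ZMod m) :
    (cyclePow (m + (3 * r + 3)) r).Adj (rsetVertex m r k) (rsetVertex m r l) ↔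
      ∃ d : ℕ, 1 ≤ d ∧ d ≤ r ∧ (k.val + d = l.val ∨ l.val + d = k.val) := by
  have hk := ZMod.val_lt k
  have hl := ZMod.val_lt l
  rw [rsetVertex, rsetVertex, cyclePow_adj_natCast_iff (by omega) (by omega) (by omega)]
  refine exists_congr fun d => and_congr_right fun hd1 => and_congr_right fun hdr => ?_
  omega

theorem extraRel_rsetVertex_iff (hrm : r < m) (k l : ZMod m) :
    extraRel (m + (3 * r + 3)) r (rsetVertex m r k) (rsetVertex m r l) ↔
      ∃ d : ℕ, 1 ≤ d ∧ d ≤ r ∧ k.val + d = l.val + m := by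
  have hk := ZMod.val_lt k
  have hl := ZMod.val_lt l
  have neg_natCast : ∀ x ≤ r, -(x : ZMod (m + (3 * r + 3))) = ((m + (3 * r + 3) - x : ℕ) : _) :=
    fun x hx => by rw [Nat.cast_sub (by omega), ZMod.natCast_self, zero_sub]
  constructor
  · rintro ⟨x, y, -, hy1, hyr, hxy, hx, hy⟩
    rw [neg_natCast x (by omega), rsetVertex, eq_comm,
      ZMod.natCast_eq_natCast_iff_of_lt (by omega) (by omega)] at hx
    rw [rsetVertex, ZMod.natCast_eq_natCast_iff_of_lt (by omega) (by omega)] at hy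
    exact ⟨x + y, by omega, hxy, by omega⟩
  · rintro ⟨d, hd1, hdr, hd⟩
    refine ⟨m - 1 - k.val, l.val + 1, by omega, by omega, by omega, by omega, ?_, ?_⟩
    · rw [neg_natCast _ (by omega), rsetVertex]
      congr 1
      omega
    · rw [rsetVertex]
      congr 1
      omega

def toRset (m r : ℕ) [NeZero m] (k : ZMod m) : Rset (m + (3 * r + 3)) r :=
  ⟨rsetVertex m r k, rsetVertex_mem k⟩

theorem toRset_bijective : Function.Bijective (toRset m r) :=
  ⟨fun _ _ h => rsetVertex_injective (congrArg Subtype.val h),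
    fun ⟨_, hv⟩ => (exists_rsetVertex_eq hv).imp fun _ hk => Subtype.ext hk⟩

theorem Rgraph_adj_toRset_iff (hrm : r < m) (k l : ZMod m) :
    (Rgraph (m + (3 * r + 3)) r).Adj (toRset m r k) (toRset m r l) ↔ (cyclePow m r).Adj k l := by
  have hkm := ZMod.val_lt k
  have hlm := ZMod.val_lt l
  have adj_val := cyclePow_adj_natCast_iff hrm hkm.le hlm.le
  rw [ZMod.natCast_zmod_val, ZMod.natCast_zmod_val] at adj_val
  rw [Rgraph, SimpleGraph.fromRel_adj, toRset, toRset, ne_eq, Subtype.mk.injEq,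
    rsetVertex_injective.eq_iff, ← (ZMod.val_injective m).eq_iff, adj_val]
  simp only [cyclePow_adj_rsetVertex_iff hrm, extraRel_rsetVertex_iff hrm]
  constructor
  · rintro ⟨-, (⟨d, hd⟩ | ⟨d, hd⟩) | (⟨d, hd⟩ | ⟨d, hd⟩)⟩ <;> exact ⟨d, by omega⟩
  · rintro ⟨d, hd1, hdr, h | h | h | h⟩
    · exact ⟨by omega, .inl (.inl ⟨d, hd1, hdr, .inl h⟩)⟩
    · exact ⟨by omega, .inl (.inl ⟨d, hd1, hdr, .inr h⟩)⟩
    · exact ⟨by omega, .inl (.inr ⟨d, hd1, hdr, h⟩)⟩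
    · exact ⟨by omega, .inr (.inr ⟨d, hd1, hdr, h⟩)⟩

end Rgraph

theorem stmt11_general (n r : ℕ) (hn : 5 * r + 4 ≤ n) :
    Nonempty (Rgraph n r ≃g cyclePow (n - (3 * r + 3)) r) := by
  obtain ⟨m, rfl⟩ : ∃ m, n = m + (3 * r + 3) := ⟨n - (3 * r + 3), by omega⟩
  rw [Nat.add_sub_cancel]
  have hrm : r < m := by omega
  have : NeZero m := ⟨by omega⟩
  exact ⟨.symm ⟨.ofBijective _ toRset_bijective, Rgraph_adj_toRset_iff hrm _ _⟩⟩

theorem stmt11 (n r : ℕ) (hr : 1 ≤ r) (hn : 5 * r + 4 ≤ n) :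
    Nonempty (Rgraph n r ≃g cyclePow (n - (3 * r + 3)) r) :=
  stmt11_general n r hn
end

section
/- Let G be a finite simple chordal graph, u a simplicial vertex (N(u) is a clique), and v ∈ N(u). Then the graph G − (u,v) obtained by deleting the edge (u,v) is chordal, and the induced subgraph G \ N[(u,v)] is chordal. -/
/-- A graph is chordal if it contains no induced cycle of length at least 4. -/
def IsChordal {V : Type*} (G : SimpleGraph V) : Prop :=
  ∀ n : ℕ, 4 ≤ n → ∀ f : ZMod n → V, Function.Injective f →
    (∀ i j : ZMod n, G.Adj (f i) (f j) ↔ (j = i + 1 ∨ i = j + 1)) → False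

theorem stmt15 {V : Type*} [Fintype V] (G : SimpleGraph V) (hG : IsChordal G) (u v : V)
    (hclique : ∀ a ∈ G.neighborSet u, ∀ b ∈ G.neighborSet u, a ≠ b → G.Adj a b)
    (hv : v ∈ G.neighborSet u) :
    IsChordal (G.deleteEdges {s(u, v)}) ∧
    IsChordal (G.induce
      ((insert u (G.neighborSet u) ∪ insert v (G.neighborSet v))ᶜ)) := by
  have key : ∀ k : ℕ, 0 < k → ∀ n : ℕ, 4 ≤ n → k < n → ((k : ZMod n) ≠ 0) := by
    intro k hk n hn hkn h
    rw [ZMod.natCast_eq_zero_iff] at h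
    have := Nat.le_of_dvd hk h
    omega
  constructor
  · intro n hn f hf hcyc
    have hadj : ∀ x y : V, (G.deleteEdges {s(u, v)}).Adj x y ↔
        G.Adj x y ∧ ¬(x = u ∧ y = v ∨ x = v ∧ y = u) := by
      intro x y
      simp [SimpleGraph.deleteEdges_adj, Sym2.eq_iff]
    by_cases h : ∃ a, f a = u
    · obtain ⟨a, ha⟩ := h
      have h1 : (a + 1 : ZMod n) ≠ a := by
        intro heq
        exact key 1 (by norm_num) n hn (by omega) (by push_cast; linear_combination heq)
      have h2 : (a - 1 : ZMod n) ≠ a := by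
        intro heq
        exact key 1 (by norm_num) n hn (by omega) (by push_cast; linear_combination -heq)
      have h3 : (a + 1 : ZMod n) ≠ a - 1 := by
        intro heq
        exact key 2 (by norm_num) n hn (by omega) (by push_cast; linear_combination heq)
      have hA1 : G.Adj u (f (a + 1)) := by
        have := (hcyc a (a + 1)).mpr (Or.inl rfl)
        rw [hadj, ha] at this
        exact this.1
      have hA2 : G.Adj u (f (a - 1)) := by
        have := (hcyc a (a - 1)).mpr (Or.inr (by ring))
        rw [hadj, ha] at this
        exact this.1
      have hne : f (a + 1) ≠ f (a - 1) := fun h => h3 (hf h)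
      have hne1 : f (a + 1) ≠ u := fun h => h1 (hf (h.trans ha.symm))
      have hne2 : f (a - 1) ≠ u := fun h => h2 (hf (h.trans ha.symm))
      have hcl : G.Adj (f (a + 1)) (f (a - 1)) :=
        hclique _ (by rwa [SimpleGraph.mem_neighborSet]) _
          (by rwa [SimpleGraph.mem_neighborSet]) hne
      have hG' : (G.deleteEdges {s(u, v)}).Adj (f (a + 1)) (f (a - 1)) := by
        rw [hadj]
        exact ⟨hcl, by tauto⟩
      rcases (hcyc (a + 1) (a - 1)).mp hG' with h4 | h4
      · exact key 3 (by norm_num) n hn (by omega) (by push_cast; linear_combination -h4)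
      · exact key 1 (by norm_num) n hn (by omega) (by push_cast; linear_combination h4)
    · push_neg at h
      apply hG n hn f hf
      intro i j
      rw [← hcyc i j, hadj]
      simp [h i, h j]
  · intro n hn f hf hcyc
    apply hG n hn (fun i => (f i : V)) (fun i j hij => hf (Subtype.ext hij))
    intro i j
    rw [← hcyc i j]
    rfl
end

section
/- Let r ≥ 1, n ≥ 5r+4, and consider the graph C̄ = \overline{C_n^r} on Z/n obtained from C_n^r by adding, for each stage s = 1,…,r−1, the edges (i, i+2r−s+2) for 1 ≤ i ≤ r+s+1 and (i, i+3r−s+3) for 1 ≤ i ≤ s, and then the edges (−x, 3r+3+y) for 0 ≤ x ≤ r−1, 1 ≤ y ≤ r, x+y ≤ r. For any edge e = (x, −(r−y)) of C_n^r with 1 ≤ x ≤ y ≤ r, the graph C̄ \ N[e] is a disjoint union of a 4-vertex path (on vertices x+r+1, x+r+2, x+2r+2, x+2r+3) and a subgraph of the part induced by {3r+4, …, 0}; in particular no vertex among x+r+1, x+r+2, x+2r+2, x+2r+3 is adjacent in C̄ to any remaining vertex outside {1,…,3r+3}. -/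
/-- The first-phase (stage) edges of the construction of `\overline{C_n^r}`:
for each `s = 1, …, r-1`, the edges `(a, a+2r-s+2)` for `1 ≤ a ≤ r+s+1` and the edges
`(a, a+3r-s+3)` for `1 ≤ a ≤ s`. -/
def stageRel (n r : ℕ) (i j : ZMod n) : Prop :=
  ∃ s a : ℕ, 1 ≤ s ∧ s ≤ r - 1 ∧ 1 ≤ a ∧ i = (a : ZMod n) ∧
    ((a ≤ r + s + 1 ∧ j = ((a + (2 * r - s + 2) : ℕ) : ZMod n)) ∨
     (a ≤ s ∧ j = ((a + (3 * r - s + 3) : ℕ) : ZMod n)))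

/-- The graph `\overline{C_n^r}` obtained from `C_n^r` by adding the stage edges and the
second-phase edges. -/
def Cbar (n r : ℕ) : SimpleGraph (ZMod n) :=
  SimpleGraph.fromRel (fun i j =>
    (∃ d : ℕ, 1 ≤ d ∧ d ≤ r ∧ i + (d : ZMod n) = j) ∨ stageRel n r i j ∨ extraRel n r i j)

lemma modEq16 {n u b : ℕ} (hu : u < 2 * n) (hb : b < n) :
    (u : ZMod n) = (b : ZMod n) ↔ (u = b ∨ u = b + n) := by
  rw [ZMod.natCast_eq_natCast_iff]
  constructor
  · intro h
    rcases le_or_gt b u with hle | hlt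
    · obtain ⟨k, hk⟩ := (Nat.modEq_iff_dvd' hle).mp h.symm
      have h2 : k ≤ 1 := by
        by_contra h3
        have : n * 2 ≤ n * k := Nat.mul_le_mul_left n (by omega)
        omega
      interval_cases k <;> omega
    · obtain ⟨k, hk⟩ := (Nat.modEq_iff_dvd' hlt.le).mp h
      have h2 : k = 0 := by
        by_contra h3
        have : n * 1 ≤ n * k := Nat.mul_le_mul_left n (by omega)
        omega
      subst h2
      omega
  · rintro (rfl | rfl)
    · rfl
    · show (b + n) % n = b % n
      exact Nat.add_mod_right b n

lemma castEq16 {n : ℕ} {a b : ℕ} (ha : a < n) (hb : b < n) :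
    (a : ZMod n) = (b : ZMod n) ↔ a = b := by
  rw [modEq16 (by omega) hb]
  omega

lemma cycIff16 {n r : ℕ} (hr : 1 ≤ r) (hn : 5 * r + 4 ≤ n) {a b : ℕ}
    (ha : a < n) (hb : b < n) :
    (∃ d : ℕ, 1 ≤ d ∧ d ≤ r ∧ (a : ZMod n) + (d : ZMod n) = (b : ZMod n)) ↔
      ((a < b ∧ b ≤ a + r) ∨ (b + n ≤ a + r)) := by
  constructor
  · rintro ⟨d, hd1, hd2, hd3⟩
    rw [← Nat.cast_add, modEq16 (by omega) hb] at hd3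
    omega
  · rintro (⟨h1, h2⟩ | h)
    · exact ⟨b - a, by omega, by omega, by rw [← Nat.cast_add]; congr 1; omega⟩
    · refine ⟨b + n - a, by omega, by omega, ?_⟩
      rw [← Nat.cast_add, modEq16 (by omega) hb]
      omega

lemma stageIff16 {n r : ℕ} (hr : 1 ≤ r) (hn : 5 * r + 4 ≤ n) {a b : ℕ}
    (ha : a < n) (hb : b < n) :
    stageRel n r (a : ZMod n) (b : ZMod n) ↔
      (1 ≤ a ∧ b ≤ 3 * r + 3 ∧
        ((a + r + 3 ≤ b ∧ b ≤ a + 2 * r + 1) ∨ (a + 2 * r + 4 ≤ b ∧ b ≤ a + 3 * r + 2))) := by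
  constructor
  · rintro ⟨s, a', hs1, hs2, ha1, hia, (⟨h1, h2⟩ | ⟨h1, h2⟩)⟩
    · rw [castEq16 ha (by omega)] at hia
      rw [castEq16 hb (by omega)] at h2
      omega
    · rw [castEq16 ha (by omega)] at hia
      rw [castEq16 hb (by omega)] at h2
      omega
  · rintro ⟨h1, h2, (⟨h3, h4⟩ | ⟨h3, h4⟩)⟩
    · exact ⟨2 * r + 2 - (b - a), a, by omega, by omega, h1, rfl,
        Or.inl ⟨by omega, by congr 1; omega⟩⟩
    · exact ⟨3 * r + 3 - (b - a), a, by omega, by omega, h1, rfl,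
        Or.inr ⟨by omega, by congr 1; omega⟩⟩

lemma extraIff16 {n r : ℕ} (hr : 1 ≤ r) (hn : 5 * r + 4 ≤ n) {a b : ℕ}
    (ha : a < n) (hb : b < n) :
    extraRel n r (a : ZMod n) (b : ZMod n) ↔
      (3 * r + 4 ≤ b ∧ b ≤ 4 * r + 3 ∧ (a = 0 ∨ n + b ≤ a + 4 * r + 3)) := by
  constructor
  · rintro ⟨x, y, hx, hy1, hy2, hxy, hia, hib⟩
    rw [castEq16 hb (by omega)] at hib
    have hia' : (((a + x) : ℕ) : ZMod n) = ((0 : ℕ) : ZMod n) := by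
      push_cast [hia]; ring
    rw [modEq16 (by omega) (by omega)] at hia'
    omega
  · rintro ⟨h1, h2, (h3 | h3)⟩
    · exact ⟨0, b - (3 * r + 3), by omega, by omega, by omega, by omega,
        by simp [h3], by congr 1; omega⟩
    · refine ⟨n - a, b - (3 * r + 3), by omega, by omega, by omega, by omega, ?_,
        by congr 1; omega⟩
      rw [eq_neg_iff_add_eq_zero, ← Nat.cast_add,
        show a + (n - a) = n by omega, ZMod.natCast_self]

lemma adjIff16' {n r : ℕ} (hr : 1 ≤ r) (hn : 5 * r + 4 ≤ n) {a b : ℕ}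
    (ha : a < n) (hb : b < n) :
    (Cbar n r).Adj (a : ZMod n) (b : ZMod n) ↔
      (a ≠ b ∧ (
        (((a < b ∧ b ≤ a + r) ∨ (b + n ≤ a + r)) ∨
         (1 ≤ a ∧ b ≤ 3 * r + 3 ∧
           ((a + r + 3 ≤ b ∧ b ≤ a + 2 * r + 1) ∨ (a + 2 * r + 4 ≤ b ∧ b ≤ a + 3 * r + 2))) ∨
         (3 * r + 4 ≤ b ∧ b ≤ 4 * r + 3 ∧ (a = 0 ∨ n + b ≤ a + 4 * r + 3))) ∨
        (((b < a ∧ a ≤ b + r) ∨ (a + n ≤ b + r)) ∨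
         (1 ≤ b ∧ a ≤ 3 * r + 3 ∧
           ((b + r + 3 ≤ a ∧ a ≤ b + 2 * r + 1) ∨ (b + 2 * r + 4 ≤ a ∧ a ≤ b + 3 * r + 2))) ∨
         (3 * r + 4 ≤ a ∧ a ≤ 4 * r + 3 ∧ (b = 0 ∨ n + a ≤ b + 4 * r + 3))))) := by
  simp only [Cbar, SimpleGraph.fromRel_adj]
  rw [cycIff16 hr hn ha hb, cycIff16 hr hn hb ha, stageIff16 hr hn ha hb,
    stageIff16 hr hn hb ha, extraIff16 hr hn ha hb, extraIff16 hr hn hb ha,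
    ne_eq, castEq16 ha hb]

lemma zv16 {n r q : ℕ} (hn : 5 * r + 4 ≤ n) (hq : q ≤ r) :
    -(((r - q : ℕ) : ZMod n)) = (((if q = r then 0 else n - (r - q)) : ℕ) : ZMod n) := by
  by_cases h : q = r
  · simp [h]
  · simp only [if_neg h]
    rw [neg_eq_iff_add_eq_zero, ← Nat.cast_add,
      show (r - q) + (n - (r - q)) = n by omega, ZMod.natCast_self]

set_option maxHeartbeats 1600000 in
lemma part1_16 (n r : ℕ) (hr : 1 ≤ r) (hn : 5 * r + 4 ≤ n)
    (p q : ℕ) (hp : 1 ≤ p) (hpq : p ≤ q) (hq : q ≤ r)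
    (m : ℕ) (hm1 : 1 ≤ m) (hm2 : m ≤ 3 * r + 3) :
    ((m : ZMod n) ≠ (p : ZMod n) ∧ ¬ (Cbar n r).Adj (p : ZMod n) (m : ZMod n) ∧
      (m : ZMod n) ≠ -(((r - q : ℕ) : ZMod n)) ∧
      ¬ (Cbar n r).Adj (-(((r - q : ℕ) : ZMod n))) (m : ZMod n)) ↔
      (m = p + r + 1 ∨ m = p + r + 2 ∨ m = p + 2 * r + 2 ∨ m = p + 2 * r + 3) := by
  have hmlt : m < n := by omega
  have hplt : p < n := by omega
  set zN : ℕ := if q = r then 0 else n - (r - q) with hzNdef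
  have hzN : (q = r ∧ zN = 0) ∨ (q ≠ r ∧ zN = n - (r - q)) := by
    by_cases h : q = r
    · exact Or.inl ⟨h, by rw [hzNdef, if_pos h]⟩
    · exact Or.inr ⟨h, by rw [hzNdef, if_neg h]⟩
  have hzNlt : zN < n := by omega
  rw [zv16 hn hq, ← hzNdef, ne_eq, ne_eq, castEq16 hmlt hplt, castEq16 hmlt hzNlt,
    adjIff16' hr hn hplt hmlt, adjIff16' hr hn hzNlt hmlt]
  omega

set_option maxHeartbeats 1600000 in
lemma part2_16 (n r : ℕ) (hr : 1 ≤ r) (hn : 5 * r + 4 ≤ n)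
    (p q : ℕ) (hp : 1 ≤ p) (hpq : p ≤ q) (hq : q ≤ r)
    (a b : ℕ)
    (ha : a = p + r + 1 ∨ a = p + r + 2 ∨ a = p + 2 * r + 2 ∨ a = p + 2 * r + 3)
    (hb : b = p + r + 1 ∨ b = p + r + 2 ∨ b = p + 2 * r + 2 ∨ b = p + 2 * r + 3) :
    ((Cbar n r).Adj ((a : ℕ) : ZMod n) ((b : ℕ) : ZMod n) ↔
      ((a = p + r + 1 ∧ b = p + r + 2) ∨ (a = p + r + 2 ∧ b = p + r + 1) ∨
       (a = p + r + 2 ∧ b = p + 2 * r + 2) ∨ (a = p + 2 * r + 2 ∧ b = p + r + 2) ∨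
       (a = p + 2 * r + 2 ∧ b = p + 2 * r + 3) ∨
       (a = p + 2 * r + 3 ∧ b = p + 2 * r + 2))) := by
  have halt : a < n := by omega
  have hblt : b < n := by omega
  rw [adjIff16' hr hn halt hblt]
  rcases ha with rfl | rfl | rfl | rfl <;> rcases hb with rfl | rfl | rfl | rfl <;> omega

set_option maxHeartbeats 1600000 in
lemma part3_16 (n r : ℕ) (hr : 1 ≤ r) (hn : 5 * r + 4 ≤ n)
    (p q : ℕ) (hp : 1 ≤ p) (hpq : p ≤ q) (hq : q ≤ r)
    (w : ZMod n)
    (hzadj : ¬ (Cbar n r).Adj (-(((r - q : ℕ) : ZMod n))) w)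
    (hnot : ¬ ∃ m : ℕ, 1 ≤ m ∧ m ≤ 3 * r + 3 ∧ w = (m : ZMod n))
    (a : ℕ)
    (ha : a = p + r + 1 ∨ a = p + r + 2 ∨ a = p + 2 * r + 2 ∨ a = p + 2 * r + 3) :
    ¬ (Cbar n r).Adj ((a : ℕ) : ZMod n) w := by
  haveI : NeZero n := ⟨by omega⟩
  have halt : a < n := by omega
  have hwlt : w.val < n := ZMod.val_lt w
  have hwc : ((w.val : ℕ) : ZMod n) = w := ZMod.natCast_rightInverse w
  have hwr : w.val = 0 ∨ 3 * r + 4 ≤ w.val := by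
    by_contra h
    push_neg at h
    exact hnot ⟨w.val, by omega, by omega, hwc.symm⟩
  set zN : ℕ := if q = r then 0 else n - (r - q) with hzNdef
  have hzN : (q = r ∧ zN = 0) ∨ (q ≠ r ∧ zN = n - (r - q)) := by
    by_cases h : q = r
    · exact Or.inl ⟨h, by rw [hzNdef, if_pos h]⟩
    · exact Or.inr ⟨h, by rw [hzNdef, if_neg h]⟩
  have hzNlt : zN < n := by omega
  rw [zv16 hn hq, ← hzNdef, ← hwc, adjIff16' hr hn hzNlt hwlt] at hzadj
  rw [← hwc, adjIff16' hr hn halt hwlt]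
  rcases ha with rfl | rfl | rfl | rfl <;> rcases hzN with ⟨h1, h2⟩ | ⟨h1, h2⟩ <;> omega

theorem stmt16 (n r : ℕ) (hr : 1 ≤ r) (hn : 5 * r + 4 ≤ n)
    (p q : ℕ) (hp : 1 ≤ p) (hpq : p ≤ q) (hq : q ≤ r) :
    -- the endpoints of the edge e = (p, -(r - q))
    let xv : ZMod n := (p : ZMod n)
    let zv : ZMod n := -(((r - q : ℕ) : ZMod n))
    -- "survives" = not in N[e] (closed neighbourhoods taken in Cbar)
    let survive : ZMod n → Prop := fun w =>
      w ≠ xv ∧ ¬ (Cbar n r).Adj xv w ∧ w ≠ zv ∧ ¬ (Cbar n r).Adj zv w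
    -- (1) the surviving vertices in {1, …, 3r+3} are exactly the four listed
    (∀ m : ℕ, 1 ≤ m → m ≤ 3 * r + 3 →
      (survive ((m : ℕ) : ZMod n) ↔
        (m = p + r + 1 ∨ m = p + r + 2 ∨ m = p + 2 * r + 2 ∨ m = p + 2 * r + 3))) ∧
    -- (2) the four surviving vertices induce a path P_4 in Cbar
    (∀ a ∈ ({p + r + 1, p + r + 2, p + 2 * r + 2, p + 2 * r + 3} : Set ℕ),
      ∀ b ∈ ({p + r + 1, p + r + 2, p + 2 * r + 2, p + 2 * r + 3} : Set ℕ),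
        ((Cbar n r).Adj ((a : ℕ) : ZMod n) ((b : ℕ) : ZMod n) ↔
          ((a = p + r + 1 ∧ b = p + r + 2) ∨ (a = p + r + 2 ∧ b = p + r + 1) ∨
           (a = p + r + 2 ∧ b = p + 2 * r + 2) ∨ (a = p + 2 * r + 2 ∧ b = p + r + 2) ∨
           (a = p + 2 * r + 2 ∧ b = p + 2 * r + 3) ∨
           (a = p + 2 * r + 3 ∧ b = p + 2 * r + 2)))) ∧
    -- (3) none of the four is adjacent to a surviving vertex outside {1, …, 3r+3}
    (∀ w : ZMod n, survive w → (¬ ∃ m : ℕ, 1 ≤ m ∧ m ≤ 3 * r + 3 ∧ w = (m : ZMod n)) →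
      ∀ a ∈ ({p + r + 1, p + r + 2, p + 2 * r + 2, p + 2 * r + 3} : Set ℕ),
        ¬ (Cbar n r).Adj ((a : ℕ) : ZMod n) w) := by
  intro xv zv survive
  refine ⟨fun m hm1 hm2 => part1_16 n r hr hn p q hp hpq hq m hm1 hm2,
    fun a ha b hb => part2_16 n r hr hn p q hp hpq hq a b (by simpa using ha) (by simpa using hb),
    fun w hw hnot a ha => part3_16 n r hr hn p q hp hpq hq w hw.2.2.2 hnot a (by simpa using ha)⟩
end

section
/- For r ≥ 1 and 1 ≤ i ≤ r, in the graph T_{3r+3} the closed neighbourhood of i is exactly {1, …, i+r} ∪ {i+r+3, …, i+2r+1} ∪ {i+2r+4, …, 3r+3} ∪ {i}; equivalently, N[i] = {1,…,3r+3} \ {i+r+1, i+r+2, i+2r+2, i+2r+3}. -/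
theorem stmt19 (r i : ℕ) (hr : 1 ≤ r) (h1 : 1 ≤ i) (h2 : i ≤ r) :
    ∀ m : ℕ, m ∈ insert i ((Tgraph r).neighborSet i) ↔
      (1 ≤ m ∧ m ≤ 3 * r + 3 ∧
        m ∉ ({i + r + 1, i + r + 2, i + 2 * r + 2, i + 2 * r + 3} : Set ℕ)) := by
  intro m
  simp only [Set.mem_insert_iff, SimpleGraph.mem_neighborSet, Tgraph,
    SimpleGraph.fromRel_adj, TEdge, Set.mem_singleton_iff]
  constructor
  · rintro (rfl | ⟨hne, h | h⟩)
    · omega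
    · obtain ⟨ha, hb, hc, hd⟩ := h
      rcases hd with hd | ⟨s, hs1, hs2, ⟨he, hi⟩ | ⟨he, hi⟩⟩ <;> omega
    · obtain ⟨ha, hb, hc, hd⟩ := h
      rcases hd with hd | ⟨s, hs1, hs2, ⟨he, hi⟩ | ⟨he, hi⟩⟩ <;> omega
  · rintro ⟨hm1, hm2, hm3⟩
    by_cases hmi : m = i
    · exact Or.inl hmi
    right
    refine ⟨fun h => hmi h.symm, ?_⟩
    by_cases hlt : m < i
    · exact Or.inr ⟨hm1, by omega, hlt, Or.inl (by omega)⟩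
    left
    refine ⟨h1, hm2, by omega, ?_⟩
    by_cases h' : m ≤ i + r
    · exact Or.inl h'
    right
    by_cases h'' : m ≤ i + 2 * r + 1
    · exact ⟨i + 2 * r + 2 - m, by omega, by omega, Or.inl ⟨by omega, by omega⟩⟩
    · exact ⟨i + 3 * r + 3 - m, by omega, by omega, Or.inr ⟨by omega, by omega⟩⟩
end
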